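/- KAM commutative case: if a KAM state s = (t̄ ū | e | π) makes the commutative transition to s' = (t̄ | e | (ū,e) :: π), then ⟦s⟧ ≡ ⟦s'⟧, where ≡ is the structural equivalence of the call-by-name calculus (generated under weak contexts by the gc, dup, @, com, and [·] axioms together with α-equivalence). -/

import Mathlib

/-- Terms of the linear substitution calculus:
    `sub t x u` is the explicit substitution `t[x←u]`. -/
inductive Term : Type
  | var : ℕ → Term
  | lam : ℕ → Term → Term
  | app : Term → Term → Term
  | sub : Term → ℕ → Term → Term
deriving DecidableEq

namespace Term

/-- Free variables. -/
def fv : Term → Finset ℕ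
  | var x => {x}
  | lam x t => t.fv.erase x
  | app t u => t.fv ∪ u.fv
  | sub t x u => t.fv.erase x ∪ u.fv

end Term

/-- Substitution contexts `L ::= ⟨·⟩ | L[x←t]`. -/
inductive LCtx : Type
  | hole : LCtx
  | sub : LCtx → ℕ → Term → LCtx
deriving DecidableEq

def LCtx.plug : LCtx → Term → Term
  | .hole, t => t
  | .sub L x u, t => .sub (L.plug t) x u

/-- Weak head contexts `H ::= ⟨·⟩ | H t | H[x←t]`. -/
inductive HCtx : Type
  | hole : HCtx
  | app : HCtx → Term → HCtx
  | sub : HCtx → ℕ → Term → HCtx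
deriving DecidableEq

def HCtx.plug : HCtx → Term → Term
  | .hole, t => t
  | .app H u, t => .app (H.plug t) u
  | .sub H x u, t => .sub (H.plug t) x u

/-- `H.captures x` holds when the hole of `H` lies under a binder for `x`. -/
def HCtx.captures : HCtx → ℕ → Prop
  | .hole, _ => False
  | .app H _, x => H.captures x
  | .sub H y _, x => y = x ∨ H.captures x

/-- Free variables of a weak head context. -/
def HCtx.fv : HCtx → Finset ℕ
  | .hole => ∅
  | .app H t => H.fv ∪ t.fv
  | .sub H y t => H.fv.erase y ∪ t.fv

/-- Multiplicative (weak-head distance-β) reduction: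
    the closure under weak head contexts of `L⟨λx.t⟩ u ↦ L⟨t[x←u]⟩`. -/
inductive Rm : Term → Term → Prop
  | step (H : HCtx) (L : LCtx) (x : ℕ) (t u : Term) :
      Rm (H.plug (.app (L.plug (.lam x t)) u)) (H.plug (L.plug (.sub t x u)))

/-- Exponential (weak linear head substitution) reduction:
    the closure under weak head contexts of `H'⟨x⟩[x←u] ↦ H'⟨u⟩[x←u]`,
    with `x` not captured by `H'`. -/
inductive Re : Term → Term → Prop
  | step (H H' : HCtx) (x : ℕ) (u : Term) :
      ¬ H'.captures x →
      Re (H.plug (.sub (H'.plug (.var x)) x u)) (H.plug (.sub (H'.plug u) x u))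
namespace Term

/-- Rename the free occurrences of `x` into `y`. -/
def rename (x y : ℕ) : Term → Term
  | .var z => if z = x then .var y else .var z
  | .lam z t => if z = x then .lam z t else .lam z (t.rename x y)
  | .app t u => .app (t.rename x y) (u.rename x y)
  | .sub t z u =>
      if z = x then .sub t z (u.rename x y)
      else .sub (t.rename x y) z (u.rename x y)

end Term

/-- α-equivalence. -/
inductive Alpha : Term → Term → Prop
  | var (x : ℕ) : Alpha (.var x) (.var x)
  | app : Alpha t t' → Alpha u u' → Alpha (.app t u) (.app t' u')
  | lam (x y : ℕ) (t t' : Term) :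
      (y = x ∨ y ∉ t.fv) → Alpha (t.rename x y) t' → Alpha (.lam x t) (.lam y t')
  | sub (x y : ℕ) (t t' u u' : Term) :
      (y = x ∨ y ∉ t.fv) → Alpha (t.rename x y) t' → Alpha u u' →
      Alpha (.sub t x u) (.sub t' y u')

/-- `RenSome x y t t'`: `t'` is obtained from `t` by renaming *some* (possibly
    none) free occurrences of `x` into `y`. -/
inductive RenSome (x y : ℕ) : Term → Term → Prop
  | varKeep : RenSome x y (.var x) (.var x)
  | varRen : RenSome x y (.var x) (.var y)
  | varOther (z : ℕ) : z ≠ x → RenSome x y (.var z) (.var z)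
  | lamBound (t : Term) : RenSome x y (.lam x t) (.lam x t)
  | lam (z : ℕ) (t t' : Term) :
      z ≠ x → z ≠ y → RenSome x y t t' → RenSome x y (.lam z t) (.lam z t')
  | app : RenSome x y t t' → RenSome x y u u' → RenSome x y (.app t u) (.app t' u')
  | subBound (t u u' : Term) :
      RenSome x y u u' → RenSome x y (.sub t x u) (.sub t x u')
  | sub (z : ℕ) (t t' u u' : Term) :
      z ≠ x → z ≠ y → RenSome x y t t' → RenSome x y u u' →
      RenSome x y (.sub t z u) (.sub t' z u')

/-- Weak contexts `W ::= ⟨·⟩ | W u | t W | W[x←u] | t[x←W]`. -/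
inductive WCtx : Type
  | hole : WCtx
  | appL : WCtx → Term → WCtx
  | appR : Term → WCtx → WCtx
  | subL : WCtx → ℕ → Term → WCtx
  | subR : Term → ℕ → WCtx → WCtx

def WCtx.plug : WCtx → Term → Term
  | .hole, t => t
  | .appL W u, t => .app (W.plug t) u
  | .appR u W, t => .app u (W.plug t)
  | .subL W x u, t => .sub (W.plug t) x u
  | .subR u x W, t => .sub u x (W.plug t)

/-- Axioms of structural equivalence for call-by-name/value:
    gc, com, [·], dup and @. -/
inductive SAx : Term → Term → Prop
  | gc (t : Term) (x : ℕ) (u : Term) :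
      x ∉ t.fv → SAx (.sub t x u) t
  | com (t : Term) (x : ℕ) (u : Term) (y : ℕ) (w : Term) :
      y ∉ u.fv → x ∉ w.fv →
      SAx (.sub (.sub t x u) y w) (.sub (.sub t y w) x u)
  | assoc (t : Term) (x : ℕ) (u : Term) (y : ℕ) (w : Term) :
      y ∉ t.fv →
      SAx (.sub (.sub t x u) y w) (.sub t x (.sub u y w))
  | dup (t t' : Term) (x y : ℕ) (u : Term) :
      y ≠ x → y ∉ t.fv → y ∉ u.fv → RenSome x y t t' →
      SAx (.sub t x u) (.sub (.sub t' x u) y u)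
  | atApp (t w : Term) (x : ℕ) (u : Term) :
      SAx (.sub (.app t w) x u) (.app (.sub t x u) (.sub w x u))

/-- Structural equivalence ≡ of the call-by-name LSC: the smallest equivalence
    relation containing the closure by weak contexts of α-equivalence together
    with the axioms gc, com, [·], dup, @. -/
inductive SEq : Term → Term → Prop
  | base (W : WCtx) {t u : Term} : (Alpha t u ∨ SAx t u) → SEq (W.plug t) (W.plug u)
  | refl (t : Term) : SEq t t
  | symm : SEq t u → SEq u t
  | trans : SEq t u → SEq u r → SEq t r
/-- Pure λ-terms (codes of the machine). -/
inductive PTerm : Type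
  | var : ℕ → PTerm
  | lam : ℕ → PTerm → PTerm
  | app : PTerm → PTerm → PTerm
deriving DecidableEq

def PTerm.toTerm : PTerm → Term
  | .var x => .var x
  | .lam x t => .lam x t.toTerm
  | .app t u => .app t.toTerm u.toTerm

def PTerm.fv : PTerm → Finset ℕ
  | .var x => {x}
  | .lam x t => t.fv.erase x
  | .app t u => t.fv ∪ u.fv

def PTerm.size : PTerm → ℕ
  | .var _ => 1
  | .lam _ t => t.size + 1
  | .app t u => t.size + u.size + 1

mutual
  /-- Closures: a code together with an environment. -/
  inductive Clo : Type
    | mk : PTerm → Env → Clo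
  /-- Local environments. -/
  inductive Env : Type
    | nil : Env
    | cons : ℕ → Clo → Env → Env
end

def Env.lookup : Env → ℕ → Option Clo
  | .nil, _ => none
  | .cons y c e, x => if y = x then some c else e.lookup x

mutual
  /-- Decoding of closures: `⟦(t̄,e)⟧ = ⟦e⟧⟨t̄⟩`. -/
  def Clo.decode : Clo → Term
    | .mk t e => Env.decodeIn e t.toTerm
  /-- Decoding of environments as contexts, given as functions on terms:
      `⟦ε⟧ = ⟨·⟩` and `⟦[x←c]::e⟧ = ⟦e⟧⟨⟨·⟩[x←⟦c⟧]⟩`. -/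
  def Env.decodeIn : Env → Term → Term
    | .nil, t => t
    | .cons x c e, t => Env.decodeIn e (.sub t x (Clo.decode c))
end

/-- Decoding of stacks as contexts: `⟦ε⟧ = ⟨·⟩`, `⟦c::π⟧ = ⟦π⟧⟨⟨·⟩ ⟦c⟧⟩`. -/
def stackDecodeIn : List Clo → Term → Term
  | [], t => t
  | c :: π, t => stackDecodeIn π (.app t (Clo.decode c))

/-- KAM states: code, environment, stack. -/
structure KState : Type where
  code : PTerm
  env : Env
  stack : List Clo

/-- Decoding of states: `⟦(t̄ | e | π)⟧ = ⟦π⟧⟨⟦e⟧⟨t̄⟩⟩`. -/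
def KState.decode (s : KState) : Term :=
  stackDecodeIn s.stack (Env.decodeIn s.env s.code.toTerm)

/-- KAM transitions: commutative, multiplicative and exponential. -/
inductive KStep : KState → KState → Prop
  | comm (t u : PTerm) (e : Env) (π : List Clo) :
      KStep ⟨.app t u, e, π⟩ ⟨t, e, Clo.mk u e :: π⟩
  | mul (x : ℕ) (t : PTerm) (e : Env) (c : Clo) (π : List Clo) :
      KStep ⟨.lam x t, e, c :: π⟩ ⟨t, Env.cons x c e, π⟩
  | exp (x : ℕ) (t : PTerm) (e e' : Env) (π : List Clo) :
      e.lookup x = some (Clo.mk t e') →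
      KStep ⟨.var x, e, π⟩ ⟨t, e', π⟩

/-- Initial states: closed code, empty environment and stack. -/
def KState.Initial (s : KState) : Prop :=
  s.code.fv = ∅ ∧ s.env = .nil ∧ s.stack = []

/-- Reachable states. -/
def KState.Reachable (s : KState) : Prop :=
  ∃ s₀, s₀.Initial ∧ Relation.ReflTransGen KStep s₀ s

/-!
Each substitution `[x←c]` of `⟦e⟧` is pushed inside the application by the `@` axiom, so
`⟦e⟧⟨t̄ ū⟩ ≡ ⟦e⟧⟨t̄⟩ ⟦e⟧⟨ū⟩`; the stack `⟦π⟧` is a weak context, under which `≡` is closed.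
-/

def WCtx.comp : WCtx → WCtx → WCtx
  | .hole, V => V
  | .appL W u, V => .appL (W.comp V) u
  | .appR u W, V => .appR u (W.comp V)
  | .subL W x u, V => .subL (W.comp V) x u
  | .subR u x W, V => .subR u x (W.comp V)

theorem WCtx.plug_comp (W V : WCtx) (t : Term) :
    (W.comp V).plug t = W.plug (V.plug t) := by
  induction W <;> simp only [WCtx.comp, WCtx.plug, *]

namespace SEq

theorem plug (W : WCtx) {t u : Term} (h : SEq t u) : SEq (W.plug t) (W.plug u) := by
  induction h with
  | base V h => rw [← WCtx.plug_comp, ← WCtx.plug_comp]; exact .base _ h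
  | refl t => exact .refl _
  | symm _ ih => exact ih.symm
  | trans _ _ ih₁ ih₂ => exact ih₁.trans ih₂

theorem decodeIn : ∀ (e : Env) {t u : Term}, SEq t u →
    SEq (Env.decodeIn e t) (Env.decodeIn e u)
  | .nil, _, _, h => h
  | .cons x c e, _, _, h => decodeIn e (h.plug (.subL .hole x c.decode))

theorem stackDecodeIn (π : List Clo) {t u : Term} (h : SEq t u) :
    SEq (_root_.stackDecodeIn π t) (_root_.stackDecodeIn π u) := by
  induction π generalizing t u with
  | nil => exact h
  | cons c π ih => exact ih (h.plug (.appL .hole c.decode))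

theorem decodeIn_app : ∀ (e : Env) (t u : Term),
    SEq (Env.decodeIn e (.app t u)) (.app (Env.decodeIn e t) (Env.decodeIn e u))
  | .nil, _, _ => .refl _
  | .cons x c e, t, u =>
      (decodeIn e (.base .hole (.inr (.atApp t u x c.decode)))).trans (decodeIn_app e _ _)

end SEq

/-- KAM distillation, commutative case: the commutative transition of the KAM
    leaves the decoding invariant up to the structural equivalence ≡ of the
    call-by-name calculus. -/
theorem kam_commutative (t u : PTerm) (e : Env) (π : List Clo) :
    SEq (KState.decode ⟨.app t u, e, π⟩)
        (KState.decode ⟨t, e, Clo.mk u e :: π⟩) :=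
  SEq.stackDecodeIn π (SEq.decodeIn_app e t.toTerm u.toTerm)
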